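/- arXiv:1811.01889 — 2 statements merged into one kernel-verified Lean document; each statement's English description precedes it below -/
import Mathlib

section
/- Abstract comparison lemma: let T₁, T₂, T₃ : Ω → Ω be weakly Picard operators on an ordered metric space with closed order, with T₁ ≤ T₂ ≤ T₃ pointwise and T₂ increasing. Then x ≤ y ≤ z implies T₁^∞(x) ≤ T₂^∞(y) ≤ T₃^∞(z). -/
/-!
Monotonicity of `T₂` alone propagates `x ≤ y ≤ z` through the iterations, giving
`T₁ⁿ x ≤ T₂ⁿ y ≤ T₃ⁿ z` for every `n`; closedness of the order passes these inequalities to the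
limits.
-/

open Filter Topology

section Iterate

variable {α : Type*} [Preorder α] {f g : α → α} {x y : α}

theorem Monotone.le_iterate_apply_of_le_of_le (hg : Monotone g) (hfg : f ≤ g) (hxy : x ≤ y)
    (n : ℕ) : f^[n] x ≤ g^[n] y :=
  (hg.le_iterate_of_le hfg n x).trans (hg.iterate n hxy)

theorem Monotone.iterate_apply_le_of_le_of_le (hf : Monotone f) (hfg : f ≤ g) (hxy : x ≤ y)
    (n : ℕ) : f^[n] x ≤ g^[n] y :=
  (hf.iterate n hxy).trans (hf.iterate_le_of_le hfg n y)

end Iterate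

/-- Abstract comparison lemma. -/
theorem abstract_comparison {Ω : Type*} [MetricSpace Ω] [PartialOrder Ω]
    (T₁ T₂ T₃ : Ω → Ω) (T₁inf T₂inf T₃inf : Ω → Ω)
    (hclosed : ∀ (u v : ℕ → Ω) (x y : Ω), (∀ n, u n ≤ v n) →
      Tendsto u atTop (𝓝 x) → Tendsto v atTop (𝓝 y) → x ≤ y)
    -- each Tᵢ is a weakly Picard operator with limit operator Tᵢinf
    (hWPO₁ : ∀ x : Ω, Function.IsFixedPt T₁ (T₁inf x) ∧
      Tendsto (fun n => T₁^[n] x) atTop (𝓝 (T₁inf x)))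
    (hWPO₂ : ∀ x : Ω, Function.IsFixedPt T₂ (T₂inf x) ∧
      Tendsto (fun n => T₂^[n] x) atTop (𝓝 (T₂inf x)))
    (hWPO₃ : ∀ x : Ω, Function.IsFixedPt T₃ (T₃inf x) ∧
      Tendsto (fun n => T₃^[n] x) atTop (𝓝 (T₃inf x)))
    -- T₁ ≤ T₂ ≤ T₃ pointwise
    (h12 : ∀ x : Ω, T₁ x ≤ T₂ x)
    (h23 : ∀ x : Ω, T₂ x ≤ T₃ x)
    -- T₂ is increasing
    (hmono : ∀ x y : Ω, x ≤ y → T₂ x ≤ T₂ y) :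
    ∀ x y z : Ω, x ≤ y → y ≤ z → T₁inf x ≤ T₂inf y ∧ T₂inf y ≤ T₃inf z := by
  intro x y z hxy hyz
  have hT₂ : Monotone T₂ := hmono
  exact ⟨hclosed _ _ _ _ (hT₂.le_iterate_apply_of_le_of_le h12 hxy) (hWPO₁ x).2 (hWPO₂ y).2,
    hclosed _ _ _ _ (hT₂.iterate_apply_le_of_le_of_le h23 hyz) (hWPO₂ y).2 (hWPO₃ z).2⟩
end

section
/- Pompeiu–Hausdorff estimate for fixed point sets: let T₁, T₂ be c-weakly Picard operators on a metric space such that d(T₁(x), T₂(x)) ≤ η for all x. Then the Hausdorff distance between the fixed point sets F_{T₁} and F_{T₂} is at most c·η. -/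
open Filter Topology Function

/-- Pompeiu–Hausdorff estimate for fixed point sets of c-weakly Picard operators. -/
theorem hausdorff_fixedPointSets {Ω : Type*} [MetricSpace Ω]
    (T₁ T₂ : Ω → Ω) (T₁inf T₂inf : Ω → Ω) (c η : ℝ) (hc : 0 < c) (hη : 0 < η)
    -- T₁ is a c-weakly Picard operator
    (hWPO₁ : ∀ x : Ω, IsFixedPt T₁ (T₁inf x) ∧
      Tendsto (fun n => T₁^[n] x) atTop (𝓝 (T₁inf x)))
    (hcP₁ : ∀ x : Ω, dist x (T₁inf x) ≤ c * dist x (T₁ x))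
    -- T₂ is a c-weakly Picard operator
    (hWPO₂ : ∀ x : Ω, IsFixedPt T₂ (T₂inf x) ∧
      Tendsto (fun n => T₂^[n] x) atTop (𝓝 (T₂inf x)))
    (hcP₂ : ∀ x : Ω, dist x (T₂inf x) ≤ c * dist x (T₂ x))
    -- the operators are η-close
    (hclose : ∀ x : Ω, dist (T₁ x) (T₂ x) ≤ η) :
    Metric.hausdorffDist (fixedPoints T₁) (fixedPoints T₂) ≤ c * η := by
  apply Metric.hausdorffDist_le_of_mem_dist (by positivity)
  · intro x hx
    refine ⟨T₂inf x, (hWPO₂ x).1, ?_⟩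
    calc dist x (T₂inf x) ≤ c * dist x (T₂ x) := hcP₂ x
    _ = c * dist (T₁ x) (T₂ x) := by rw [hx]
    _ ≤ c * η := by nlinarith [hclose x]
  · intro x hx
    refine ⟨T₁inf x, (hWPO₁ x).1, ?_⟩
    calc dist x (T₁inf x) ≤ c * dist x (T₁ x) := hcP₁ x
    _ = c * dist (T₁ x) (T₂ x) := by rw [hx, dist_comm]
    _ ≤ c * η := by nlinarith [hclose x]
end
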